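/- arXiv:hep-th/9507097 — 4 statements merged into one kernel-verified Lean document; each statement's English description precedes it below -/
import Mathlib

section
/- If a ∈ S^m_{ρ,δ}(X×ℝⁿ), then the operator A defined by Au(x) = (2π)^{−n/2} ∫ e^{ixη} a(x,η) û(η) dη is a continuous linear map from compactly supported smooth functions on X to smooth functions on X; here û is the Fourier transform of u. -/
noncomputable section

open MeasureTheory

abbrev Eu (n : ℕ) := EuclideanSpace ℝ (Fin n)

/-- The symbol class `S^m_{ρ,δ}(X × ℝⁿ)`. -/
def SymbolClass (n : ℕ) (X : Set (Eu n)) (m ρ δ : ℝ)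
    (a : Eu n → Eu n → ℂ) : Prop :=
  ContDiffOn ℝ (⊤ : ℕ∞) (fun p : Eu n × Eu n => a p.1 p.2) (X ×ˢ (Set.univ : Set (Eu n))) ∧
  ∀ K : Set (Eu n), K ⊆ X → IsCompact K → ∀ k l : ℕ,
    ∃ C : ℝ, ∀ x ∈ K, ∀ ξ : Eu n,
      ‖iteratedFDeriv ℝ l (fun y => iteratedFDeriv ℝ k (fun η => a y η) ξ) x‖ ≤
        C * (1 + ‖ξ‖) ^ (m - ρ * (k : ℝ) + δ * (l : ℝ))

/-- The Fourier transform `û(η) = (2π)^{-n/2} ∫ e^{-i x·η} u(x) dx`. -/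
def fourierT (n : ℕ) (u : Eu n → ℂ) (η : Eu n) : ℂ :=
  (((2 * Real.pi) ^ (-(n : ℝ) / 2) : ℝ) : ℂ) *
    ∫ y : Eu n, Complex.exp (-(Complex.I) * ((inner ℝ y η : ℝ) : ℂ)) * u y

set_option synthInstance.maxHeartbeats 1000000
set_option maxHeartbeats 1000000

/-! ### Auxiliary lemmas -/

lemma integ (n : ℕ) : Integrable (fun η : Eu n => ((1+‖η‖)^(n+1) : ℝ)⁻¹) := by
  have := integrable_one_add_norm (E := Eu n) (μ := volume) (r := n+1) (by simp)
  refine this.congr (Filter.Eventually.of_forall fun x => ?_)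
  show (1 + ‖x‖) ^ (-((n:ℝ)+1)) = _
  rw [Real.rpow_neg (by positivity)]
  congr 1
  rw [← Real.rpow_natCast (1 + ‖x‖) (n+1)]
  norm_num

lemma inner_hasFDeriv (n : ℕ) (η y : Eu n) :
    HasFDerivAt (fun y : Eu n => ((inner ℝ y η : ℝ) : ℂ))
      (Complex.ofRealCLM.comp (innerSL ℝ η)) y := by
  refine Complex.ofRealCLM.hasFDerivAt.comp y ?_
  exact ((innerSL ℝ η).hasFDerivAt (x := y)).congr_of_eventuallyEq
    (Filter.Eventually.of_forall fun z => real_inner_comm η z)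

lemma exp_hasFDeriv (n : ℕ) (η y : Eu n) :
    HasFDerivAt (fun y : Eu n => Complex.exp (Complex.I * ((inner ℝ y η : ℝ) : ℂ)))
      (Complex.exp (Complex.I * ((inner ℝ y η : ℝ) : ℂ)) •
        (Complex.I • (Complex.ofRealCLM.comp (innerSL ℝ η)))) y :=
  ((inner_hasFDeriv n η y).const_mul Complex.I).cexp

lemma M_norm (n : ℕ) (η : Eu n) :
    ‖(Complex.I • (Complex.ofRealCLM.comp (innerSL ℝ η)) : Eu n →L[ℝ] ℂ)‖ ≤ ‖η‖ := by
  refine ContinuousLinearMap.opNorm_le_bound _ (norm_nonneg η) fun v => ?_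
  simp only [ContinuousLinearMap.smul_apply, ContinuousLinearMap.coe_comp', Function.comp_apply,
    Complex.ofRealCLM_apply, innerSL_apply_apply, norm_smul, Complex.norm_I, one_mul,
    Complex.norm_real]
  exact abs_real_inner_le_norm η v

lemma exp_contDiff (n : ℕ) (η : Eu n) : ContDiff ℝ (⊤:ℕ∞)
    (fun y : Eu n => Complex.exp (Complex.I * ((inner ℝ y η : ℝ) : ℂ))) := by
  apply ContDiff.cexp
  exact ContDiff.mul contDiff_const
    (Complex.ofRealCLM.contDiff.comp (contDiff_id.inner ℝ contDiff_const))

lemma exp_iterated_bound (n : ℕ) (η : Eu n) (i : ℕ) (x : Eu n) :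
    ‖iteratedFDeriv ℝ i (fun y : Eu n => Complex.exp (Complex.I * ((inner ℝ y η : ℝ) : ℂ))) x‖
      ≤ (1 + ‖η‖) ^ i := by
  set M : Eu n →L[ℝ] ℂ := Complex.I • (Complex.ofRealCLM.comp (innerSL ℝ η)) with hM
  set f : Eu n → ℂ := fun y => Complex.exp (Complex.I * ((inner ℝ y η : ℝ) : ℂ)) with hf
  have hMle : ‖M‖ ≤ 1 + ‖η‖ := (M_norm n η).trans (by linarith [norm_nonneg η])
  set G : ℂ →L[ℝ] (Eu n →L[ℝ] ℂ) :=
    ((ContinuousLinearMap.id ℂ ℂ).smulRight M).restrictScalars ℝ with hG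
  have hGnorm : ‖G‖ ≤ 1 + ‖η‖ := by
    rw [hG, ContinuousLinearMap.norm_restrictScalars,
      ContinuousLinearMap.norm_smulRight_apply]
    simpa using hMle
  have hfd : fderiv ℝ f = G ∘ f := by
    funext y
    rw [(exp_hasFDeriv n η y).fderiv]
    rfl
  have key : ∀ i x, ‖iteratedFDeriv ℝ i f x‖ ≤ (1 + ‖η‖) ^ i := by
    intro i
    induction i with
    | zero =>
      intro x
      rw [norm_iteratedFDeriv_zero, pow_zero]
      show ‖Complex.exp (Complex.I * ((inner ℝ x η : ℝ) : ℂ))‖ ≤ 1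
      rw [show Complex.I * ((inner ℝ x η : ℝ) : ℂ) = ((inner ℝ x η : ℝ) : ℂ) * Complex.I by ring]
      rw [Complex.norm_exp_ofReal_mul_I]
    | succ i ih =>
      intro x
      rw [← norm_iteratedFDeriv_fderiv, hfd,
        G.iteratedFDeriv_comp_left (exp_contDiff n η).contDiffAt (x := x) (mod_cast le_top)]
      calc ‖G.compContinuousMultilinearMap (iteratedFDeriv ℝ i f x)‖
          ≤ ‖G‖ * ‖iteratedFDeriv ℝ i f x‖ := G.norm_compContinuousMultilinearMap_le _
        _ ≤ (1 + ‖η‖) * (1 + ‖η‖) ^ i := by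
            apply mul_le_mul hGnorm (ih x) (norm_nonneg _) (by positivity)
        _ = (1 + ‖η‖) ^ (i + 1) := by ring
  exact key i x

/-! ### The `Nice` predicate and differentiation under the integral -/

section nice
variable {n : ℕ} {X : Set (Eu n)}

/-- jointly smooth on `X × ℝⁿ`, with locally-uniform polynomial bounds on all
`x`-derivatives. -/
def Nice (X : Set (Eu n)) (F : Type) [NormedAddCommGroup F] [NormedSpace ℂ F]
    (g : Eu n → Eu n → F) : Prop :=
  ContDiffOn ℝ (⊤:ℕ∞) (fun p : Eu n × Eu n => g p.1 p.2) (X ×ˢ (Set.univ : Set (Eu n))) ∧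
  ∀ K : Set (Eu n), K ⊆ X → IsCompact K → ∀ l : ℕ,
    ∃ (C : ℝ) (N : ℕ), 0 ≤ C ∧ ∀ x ∈ K, ∀ η : Eu n,
      ‖iteratedFDeriv ℝ l (fun y => g y η) x‖ ≤ C * (1 + ‖η‖) ^ N

variable {F : Type} [NormedAddCommGroup F] [NormedSpace ℂ F]

lemma Nice.cont_eta {g : Eu n → Eu n → F} (hg : Nice X F g) {x : Eu n} (hx : x ∈ X) :
    Continuous (fun η => g x η) := by
  have h : ContDiffOn ℝ (⊤:ℕ∞) (fun η : Eu n => g x η) Set.univ :=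
    hg.1.comp ((contDiff_const.prodMk contDiff_id).contDiffOn)
      (fun η _ => ⟨hx, Set.mem_univ _⟩)
  exact continuousOn_univ.mp h.continuousOn

lemma Nice.contDiffOn_x {g : Eu n → Eu n → F} (hg : Nice X F g) (η : Eu n) :
    ContDiffOn ℝ (⊤:ℕ∞) (fun x => g x η) X :=
  hg.1.comp ((contDiff_id.prodMk contDiff_const).contDiffOn)
    (fun x hx => ⟨hx, Set.mem_univ _⟩)

lemma Nice.fderiv_nice {g : Eu n → Eu n → F} (hX : IsOpen X) (hg : Nice X F g) :
    Nice X (Eu n →L[ℝ] F) (fun x η => fderiv ℝ (fun y => g y η) x) := by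
  have hop : IsOpen (X ×ˢ (Set.univ : Set (Eu n))) := hX.prod isOpen_univ
  have hpt : ∀ p ∈ X ×ˢ (Set.univ : Set (Eu n)),
      fderiv ℝ (fun y => g y p.2) p.1 =
        (fderiv ℝ (fun q : Eu n × Eu n => g q.1 q.2) p).comp
          (ContinuousLinearMap.inl ℝ (Eu n) (Eu n)) := by
    intro p hp
    have hdiff : DifferentiableAt ℝ (fun q : Eu n × Eu n => g q.1 q.2) p :=
      (hg.1.differentiableOn (by simp)).differentiableAt (hop.mem_nhds hp)
    have h2 : HasFDerivAt (fun x : Eu n => g x p.2)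
        ((fderiv ℝ (fun q : Eu n × Eu n => g q.1 q.2) p).comp
          (ContinuousLinearMap.inl ℝ (Eu n) (Eu n))) p.1 :=
      by
        have h := HasFDerivAt.comp (g := fun q : Eu n × Eu n => g q.1 q.2) p.1
          (hdiff.hasFDerivAt : HasFDerivAt _ _ (p.1, p.2)) (hasFDerivAt_prodMk_left (𝕜 := ℝ) p.1 p.2)
        exact h
    exact h2.fderiv
  constructor
  · have h1 : ContDiffOn ℝ (⊤:ℕ∞) (fderiv ℝ (fun q : Eu n × Eu n => g q.1 q.2))
        (X ×ˢ (Set.univ : Set (Eu n))) :=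
      hg.1.fderiv_of_isOpen hop (by exact_mod_cast le_top)
    have h2 : ContDiffOn ℝ (⊤:ℕ∞)
        (fun p : Eu n × Eu n => (fderiv ℝ (fun q : Eu n × Eu n => g q.1 q.2) p).comp
          (ContinuousLinearMap.inl ℝ (Eu n) (Eu n))) (X ×ˢ (Set.univ : Set (Eu n))) :=
      h1.clm_comp contDiffOn_const
    exact h2.congr hpt
  · intro K hKX hK l
    obtain ⟨C, N, hC0, hb⟩ := hg.2 K hKX hK (l+1)
    refine ⟨C, N, hC0, fun x hx η => ?_⟩
    rw [norm_iteratedFDeriv_fderiv]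
    exact hb x hx η

lemma smul_bound {w : Eu n → ℂ} {Cw C : ℝ} {N : ℕ} {η : Eu n}
    (hCw : (1+‖η‖)^(N+(n+1)) * ‖w η‖ ≤ Cw) (hC0 : 0 ≤ C) {v : F}
    (hv : ‖v‖ ≤ C * (1+‖η‖)^N) :
    ‖w η • v‖ ≤ C * Cw * ((1+‖η‖)^(n+1))⁻¹ := by
  have hB : (0:ℝ) < 1 + ‖η‖ := by positivity
  rw [norm_smul, ← div_eq_mul_inv, le_div_iff₀ (by positivity)]
  calc ‖w η‖ * ‖v‖ * (1+‖η‖)^(n+1) ≤ ‖w η‖ * (C * (1+‖η‖)^N) * (1+‖η‖)^(n+1) := by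
        have := norm_nonneg (w η); have : (0:ℝ) ≤ (1+‖η‖)^(n+1) := by positivity
        gcongr
    _ = C * ((1+‖η‖)^(N+(n+1)) * ‖w η‖) := by rw [pow_add]; ring
    _ ≤ C * Cw := mul_le_mul_of_nonneg_left hCw hC0

variable [CompleteSpace F]

omit [CompleteSpace F] in
lemma nice_integrable {g : Eu n → Eu n → F} (hg : Nice X F g) {w : Eu n → ℂ}
    (hw_cont : Continuous w) (hw : ∀ N : ℕ, ∃ C, 0 ≤ C ∧ ∀ η, (1+‖η‖)^N * ‖w η‖ ≤ C)
    {x : Eu n} (hx : x ∈ X) : Integrable (fun η => w η • g x η) := by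
  obtain ⟨C, N, hC0, hb⟩ := hg.2 {x} (by simpa using hx) isCompact_singleton 0
  obtain ⟨Cw, _, hCw⟩ := hw (N + (n+1))
  refine Integrable.mono' (((integ n).const_mul (C * Cw)))
    ((hw_cont.smul (hg.cont_eta hx)).aestronglyMeasurable)
    (Filter.Eventually.of_forall fun η => ?_)
  refine smul_bound (hCw η) hC0 ?_
  have := hb x (Set.mem_singleton x) η
  rwa [norm_iteratedFDeriv_zero] at this

lemma hasFDerivAt_int (hX : IsOpen X) {g : Eu n → Eu n → F} (hg : Nice X F g) {w : Eu n → ℂ}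
    (hw_cont : Continuous w) (hw : ∀ N : ℕ, ∃ C, 0 ≤ C ∧ ∀ η, (1+‖η‖)^N * ‖w η‖ ≤ C)
    {x₀ : Eu n} (hx₀ : x₀ ∈ X) :
    HasFDerivAt (fun x => ∫ η, w η • g x η)
      (∫ η, w η • fderiv ℝ (fun y => g y η) x₀) x₀ := by
  obtain ⟨ε, hε, hball⟩ : ∃ ε > 0, Metric.closedBall x₀ ε ⊆ X := by
    obtain ⟨ε, hε, h⟩ := Metric.isOpen_iff.1 hX x₀ hx₀
    exact ⟨ε/2, by linarith, (Metric.closedBall_subset_ball (by linarith)).trans h⟩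
  have hg1 := hg.fderiv_nice hX
  obtain ⟨C, N, hC0, hb⟩ := hg1.2 (Metric.closedBall x₀ ε) hball (isCompact_closedBall _ _) 0
  obtain ⟨Cw, _, hCw⟩ := hw (N + (n+1))
  apply hasFDerivAt_integral_of_dominated_of_fderiv_le (hs := Metric.ball_mem_nhds x₀ hε)
    (bound := fun η => C * Cw * ((1+‖η‖)^(n+1))⁻¹)
    (F' := fun x η => w η • fderiv ℝ (fun y => g y η) x)
  · filter_upwards [hX.mem_nhds hx₀] with x hx
    exact (hw_cont.smul (hg.cont_eta hx)).aestronglyMeasurable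
  · exact nice_integrable hg hw_cont hw hx₀
  · exact (hw_cont.smul (hg1.cont_eta hx₀)).aestronglyMeasurable
  · refine Filter.Eventually.of_forall fun η x hxb => ?_
    refine smul_bound (F := Eu n →L[ℝ] F) (hCw η) hC0 ?_
    have := hb x (Metric.ball_subset_closedBall hxb) η
    rwa [norm_iteratedFDeriv_zero] at this
  · exact (integ n).const_mul _
  · refine Filter.Eventually.of_forall fun η x hxb => ?_
    have hx : x ∈ X := hball (Metric.ball_subset_closedBall hxb)
    have hd : DifferentiableAt ℝ (fun y => g y η) x :=
      ((hg.contDiffOn_x η).differentiableOn (by simp)).differentiableAt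
        (hX.mem_nhds hx)
    exact hd.hasFDerivAt.const_smul (w η)

end nice

section key
variable {n : ℕ} {X : Set (Eu n)}

lemma key (hX : IsOpen X) {w : Eu n → ℂ} (hw_cont : Continuous w)
    (hw : ∀ N : ℕ, ∃ C, 0 ≤ C ∧ ∀ η, (1+‖η‖)^N * ‖w η‖ ≤ C) (k : ℕ) :
    ∀ (F : Type) (_ : NormedAddCommGroup F), ∀ (_ : NormedSpace ℂ F) (_ : CompleteSpace F),
      ∀ (g : Eu n → Eu n → F), Nice X F g →
        ContDiffOn ℝ (k : ℕ∞) (fun x => ∫ η, w η • g x η) X := by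
  induction k with
  | zero =>
    intro F iF1 iF2 iF3 g hg
    rw [show ((((0:ℕ):ℕ∞)) : WithTop ℕ∞) = 0 by norm_cast]
    rw [contDiffOn_zero]
    intro x₀ hx₀
    obtain ⟨ε, hε, hball⟩ : ∃ ε > 0, Metric.closedBall x₀ ε ⊆ X := by
      obtain ⟨ε, hε, h⟩ := Metric.isOpen_iff.1 hX x₀ hx₀
      exact ⟨ε/2, by linarith, (Metric.closedBall_subset_ball (by linarith)).trans h⟩
    obtain ⟨C, N, hC0, hb⟩ := hg.2 (Metric.closedBall x₀ ε) hball (isCompact_closedBall _ _) 0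
    obtain ⟨Cw, _, hCw⟩ := hw (N + (n+1))
    apply ContinuousAt.continuousWithinAt
    apply continuousAt_of_dominated (bound := fun η => C * Cw * ((1+‖η‖)^(n+1))⁻¹)
    · filter_upwards [hX.mem_nhds hx₀] with x hx
      exact (hw_cont.smul (hg.cont_eta hx)).aestronglyMeasurable
    · filter_upwards [Metric.closedBall_mem_nhds x₀ hε] with x hx
      refine Filter.Eventually.of_forall fun η => ?_
      refine smul_bound (hCw η) hC0 ?_
      have := hb x hx η
      rwa [norm_iteratedFDeriv_zero] at this
    · exact (integ n).const_mul _
    · refine Filter.Eventually.of_forall fun η => ?_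
      exact (((hg.contDiffOn_x η).continuousOn).continuousAt (hX.mem_nhds hx₀)).const_smul (w η)
  | succ k ih =>
    intro F iF1 iF2 iF3 g hg
    have hg1 := hg.fderiv_nice hX
    have hI : ∀ x ∈ X, HasFDerivAt (fun x => ∫ η, w η • g x η)
        (∫ η, w η • fderiv ℝ (fun y => g y η) x) x :=
      fun x hx => hasFDerivAt_int hX hg hw_cont hw hx
    rw [show ((((k+1:ℕ)):ℕ∞) : WithTop ℕ∞) = ((k:ℕ∞) : WithTop ℕ∞) + 1 by push_cast; rfl]
    rw [contDiffOn_succ_iff_fderiv_of_isOpen hX]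
    refine ⟨fun x hx => (hI x hx).differentiableAt.differentiableWithinAt, ?_, ?_⟩
    · intro h; exact absurd h (by simp)
    · have h2 := ih (Eu n →L[ℝ] F) inferInstance inferInstance inferInstance
        (fun x η => fderiv ℝ (fun y => g y η) x) hg1
      exact h2.congr fun x hx => (hI x hx).fderiv

end key

/-! ### Fourier transform decay -/

section fourier
open SchwartzMap
open scoped FourierTransform
variable {n : ℕ}

/-- compactly supported smooth functions are Schwartz -/
def toSchw (u : Eu n → ℂ) (hu : ContDiff ℝ (⊤:ℕ∞) u) (hcs : HasCompactSupport u) :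
    SchwartzMap (Eu n) ℂ where
  toFun := u
  smooth' := hu
  decay' := by
    intro k m
    have hcont : Continuous (fun x : Eu n => ‖x‖ ^ k * ‖iteratedFDeriv ℝ m u x‖) :=
      (continuous_norm.pow k).mul
        ((hu.continuous_iteratedFDeriv (by exact_mod_cast le_top)).norm)
    have hsupp : HasCompactSupport (fun x : Eu n => ‖x‖ ^ k * ‖iteratedFDeriv ℝ m u x‖) := by
      apply HasCompactSupport.mul_left
      exact (hcs.iteratedFDeriv m).norm
    obtain ⟨C, hC⟩ := hcont.bounded_above_of_compact_support hsupp
    exact ⟨C, fun x => le_trans (le_abs_self _) (hC x)⟩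

lemma fourierT_eq (u : Eu n → ℂ) (η : Eu n) :
    fourierT n u η = (((2 * Real.pi) ^ (-(n : ℝ) / 2) : ℝ) : ℂ) *
      𝓕 u ((2 * Real.pi)⁻¹ • η) := by
  rw [fourierT, Real.fourier_eq']
  refine congrArg (fun z : ℂ => (((2 * Real.pi) ^ (-(n : ℝ) / 2) : ℝ) : ℂ) * z) ?_
  refine integral_congr_ae (Filter.Eventually.of_forall fun y => ?_)
  show Complex.exp (-Complex.I * ((inner ℝ y η : ℝ) : ℂ)) * u y
      = Complex.exp (((-2 * Real.pi * (inner ℝ y ((2 * Real.pi)⁻¹ • η) : ℝ) : ℝ) : ℂ)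
          * Complex.I) * u y
  have h1 : (inner ℝ y ((2 * Real.pi)⁻¹ • η) : ℝ) = (2 * Real.pi)⁻¹ * (inner ℝ y η : ℝ) :=
    real_inner_smul_right _ _ _
  have hpi : (2 * Real.pi : ℝ) ≠ 0 := by positivity
  have h2 : (-2 * Real.pi * (inner ℝ y ((2 * Real.pi)⁻¹ • η) : ℝ) : ℝ) = -(inner ℝ y η : ℝ) := by
    rw [h1]; field_simp
  congr 1
  rw [h2]
  push_cast
  ring

lemma fourierT_decay (u : Eu n → ℂ) (hu : ContDiff ℝ (⊤:ℕ∞) u) (hcs : HasCompactSupport u) :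
    Continuous (fourierT n u) ∧
      ∀ N : ℕ, ∃ C, 0 ≤ C ∧ ∀ η, (1+‖η‖)^N * ‖fourierT n u η‖ ≤ C := by
  set s : SchwartzMap (Eu n) ℂ := toSchw u hu hcs with hs
  set t : SchwartzMap (Eu n) ℂ := SchwartzMap.fourierTransformCLM ℝ s with ht
  have c0pos : (0:ℝ) < (2 * Real.pi) ^ (-(n : ℝ) / 2) := by positivity
  have hrep : ∀ η, fourierT n u η =
      (((2 * Real.pi) ^ (-(n : ℝ) / 2) : ℝ) : ℂ) * t ((2 * Real.pi)⁻¹ • η) := by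
    intro η
    rw [fourierT_eq u η, ht, SchwartzMap.fourierTransformCLM_apply]
    rfl
  constructor
  · have : Continuous fun η : Eu n => (((2 * Real.pi) ^ (-(n : ℝ) / 2) : ℝ) : ℂ) *
        t ((2 * Real.pi)⁻¹ • η) :=
      continuous_const.mul (t.continuous.comp (continuous_const_smul _))
    exact this.congr fun η => (hrep η).symm
  · intro N
    set Cs : ℝ := 2 ^ N * (Finset.Iic ((N : ℕ), (0:ℕ))).sup
      (fun m => SchwartzMap.seminorm ℝ m.1 m.2) t with hCs
    have hCsb : ∀ w : Eu n, (1+‖w‖)^N * ‖t w‖ ≤ Cs := by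
      intro w
      have := SchwartzMap.one_add_le_sup_seminorm_apply (𝕜 := ℝ) (m := ((N:ℕ),(0:ℕ)))
        (le_refl N) (le_refl 0) t w
      rwa [norm_iteratedFDeriv_zero] at this
    have hCs0 : 0 ≤ Cs := le_trans (by positivity) (hCsb 0)
    have h2pi : (1:ℝ) ≤ 2 * Real.pi := by
      have := Real.pi_gt_three; linarith
    refine ⟨(2 * Real.pi) ^ (-(n : ℝ) / 2) * ((2 * Real.pi) ^ N * Cs), by positivity,
      fun η => ?_⟩
    set w : Eu n := (2 * Real.pi)⁻¹ • η with hw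
    have hnw : ‖η‖ = (2 * Real.pi) * ‖w‖ := by
      rw [hw, norm_smul]
      have h3 : ‖(2 * Real.pi)⁻¹‖ = (2 * Real.pi)⁻¹ := by
        rw [Real.norm_eq_abs, abs_of_pos (by positivity)]
      rw [h3]
      field_simp
    have hpow : (1+‖η‖)^N ≤ (2 * Real.pi)^N * (1+‖w‖)^N := by
      rw [← mul_pow]
      apply pow_le_pow_left₀ (by positivity)
      rw [hnw]
      nlinarith [norm_nonneg w]
    have hnorm : ‖fourierT n u η‖ = (2 * Real.pi) ^ (-(n : ℝ) / 2) * ‖t w‖ := by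
      rw [hrep η, norm_mul, Complex.norm_real, Real.norm_eq_abs, abs_of_pos c0pos]
    rw [hnorm]
    calc (1+‖η‖)^N * ((2 * Real.pi) ^ (-(n : ℝ) / 2) * ‖t w‖)
        ≤ ((2 * Real.pi)^N * (1+‖w‖)^N) * ((2 * Real.pi) ^ (-(n : ℝ) / 2) * ‖t w‖) := by
          have : (0:ℝ) ≤ (2 * Real.pi) ^ (-(n : ℝ) / 2) * ‖t w‖ := by positivity
          exact mul_le_mul_of_nonneg_right hpow this
      _ = (2 * Real.pi) ^ (-(n : ℝ) / 2) * ((2 * Real.pi) ^ N * ((1+‖w‖)^N * ‖t w‖)) := by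
          ring
      _ ≤ (2 * Real.pi) ^ (-(n : ℝ) / 2) * ((2 * Real.pi) ^ N * Cs) := by
          have h1 := hCsb w
          have h2 : (0:ℝ) ≤ (2 * Real.pi) ^ N := by positivity
          exact mul_le_mul_of_nonneg_left (mul_le_mul_of_nonneg_left h1 h2) (le_of_lt c0pos)

end fourier

/-! ### Symbols give `Nice` integrands -/

section symbol
variable {n : ℕ} {X : Set (Eu n)} {m ρ δ : ℝ} {a : Eu n → Eu n → ℂ}

lemma symbol_contDiffOn_x (ha : SymbolClass n X m ρ δ a) (η : Eu n) :
    ContDiffOn ℝ (⊤:ℕ∞) (fun x => a x η) X :=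
  ha.1.comp ((contDiff_id.prodMk contDiff_const).contDiffOn)
    (fun x hx => ⟨hx, Set.mem_univ _⟩)

lemma symbol_x_bound (hρ0 : 0 ≤ ρ) (hδ1 : δ ≤ 1) (ha : SymbolClass n X m ρ δ a)
    {K : Set (Eu n)} (hKX : K ⊆ X) (hK : IsCompact K) (l : ℕ) :
    ∃ C, 0 ≤ C ∧ ∀ x ∈ K, ∀ η,
      ‖iteratedFDeriv ℝ l (fun y => a y η) x‖ ≤ C * (1+‖η‖)^(⌈m⌉₊ + l) := by
  obtain ⟨C, hC⟩ := ha.2 K hKX hK 0 l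
  refine ⟨max C 0, le_max_right _ _, fun x hx η => ?_⟩
  have h1 := hC x hx η
  have hzero : (fun y => iteratedFDeriv ℝ 0 (fun η' => a y η') η)
      = (⇑(continuousMultilinearCurryFin0 ℝ (Eu n) ℂ).symm) ∘ (fun y => a y η) := by
    funext y
    rw [iteratedFDeriv_zero_eq_comp]
    rfl
  rw [hzero, LinearIsometryEquiv.norm_iteratedFDeriv_comp_left] at h1
  refine h1.trans ?_
  have hbase : (1:ℝ) ≤ 1 + ‖η‖ := by linarith [norm_nonneg η]
  have hexp : m - ρ * ((0:ℕ):ℝ) + δ * (l:ℝ) ≤ ((⌈m⌉₊ + l : ℕ) : ℝ) := by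
    push_cast
    have h2 : m ≤ (⌈m⌉₊ : ℝ) := Nat.le_ceil m
    have h3 : δ * (l:ℝ) ≤ (l:ℝ) := by
      have : (0:ℝ) ≤ (l:ℝ) := Nat.cast_nonneg l
      nlinarith
    simp only [Nat.cast_zero, mul_zero]
    linarith
  calc C * (1+‖η‖) ^ (m - ρ * ((0:ℕ):ℝ) + δ * (l:ℝ))
      ≤ max C 0 * (1+‖η‖) ^ (m - ρ * ((0:ℕ):ℝ) + δ * (l:ℝ)) := by
        apply mul_le_mul_of_nonneg_right (le_max_left _ _)
        positivity
    _ ≤ max C 0 * (1+‖η‖) ^ (((⌈m⌉₊ + l : ℕ)) : ℝ) :=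
        mul_le_mul_of_nonneg_left
          (Real.rpow_le_rpow_of_exponent_le hbase hexp) (le_max_right _ _)
    _ = max C 0 * (1+‖η‖) ^ (⌈m⌉₊ + l) := by rw [Real.rpow_natCast]

lemma nice_of_symbol (hX : IsOpen X) (hρ0 : 0 ≤ ρ) (hδ1 : δ ≤ 1)
    (ha : SymbolClass n X m ρ δ a) :
    Nice X ℂ (fun x η => Complex.exp (Complex.I * ((inner ℝ x η : ℝ) : ℂ)) * a x η) := by
  constructor
  · apply ContDiffOn.mul _ ha.1
    apply ContDiff.contDiffOn
    apply ContDiff.cexp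
    exact contDiff_const.mul
      (Complex.ofRealCLM.contDiff.comp (contDiff_fst.inner ℝ contDiff_snd))
  · intro K hKX hK l
    have H := fun i => symbol_x_bound hρ0 hδ1 ha hKX hK i
    choose Ca hCa0 hCa using H
    refine ⟨∑ i ∈ Finset.range (l+1), (l.choose i : ℝ) * Ca (l-i), ⌈m⌉₊ + l,
      Finset.sum_nonneg fun i _ => mul_nonneg (Nat.cast_nonneg _) (hCa0 _), ?_⟩
    intro x hx η
    have hin : x ∈ X := hKX hx
    set fe : Eu n → ℂ := fun y : Eu n => Complex.exp (Complex.I * ((inner ℝ y η : ℝ) : ℂ))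
      with hfe_def
    have hfe : ContDiffOn ℝ (⊤:ℕ∞) fe X := (exp_contDiff n η).contDiffOn
    have hae : ContDiffOn ℝ (⊤:ℕ∞) (fun y => a y η) X := symbol_contDiffOn_x ha η
    have hw1 : ‖iteratedFDeriv ℝ l (fun y => fe y * a y η) x‖
        = ‖iteratedFDerivWithin ℝ l (fe * (fun y => a y η)) X x‖ := by
      rw [iteratedFDerivWithin_of_isOpen l hX hin]
      rfl
    rw [show (fun y => fe y * a y η) = fun y =>
        Complex.exp (Complex.I * ((inner ℝ y η : ℝ) : ℂ)) * a y η from rfl] at hw1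
    rw [hw1]
    have hleib := norm_iteratedFDerivWithin_mul_le (𝕜 := ℝ) (N := (⊤:ℕ∞)) hfe hae
      hX.uniqueDiffOn hin (n := l) (mod_cast le_top)
    refine hleib.trans ?_
    rw [Finset.sum_mul]
    apply Finset.sum_le_sum
    intro i hi
    have hil : i ≤ l := Nat.lt_succ_iff.mp (Finset.mem_range.mp hi)
    have he1 : ‖iteratedFDerivWithin ℝ i fe X x‖ ≤ (1+‖η‖)^i := by
      rw [iteratedFDerivWithin_of_isOpen i hX hin]
      exact exp_iterated_bound n η i x
    have he2 : ‖iteratedFDerivWithin ℝ (l-i) (fun y => a y η) X x‖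
        ≤ Ca (l-i) * (1+‖η‖)^(⌈m⌉₊ + (l-i)) := by
      rw [iteratedFDerivWithin_of_isOpen (l-i) hX hin]
      exact hCa (l-i) x hx η
    calc (l.choose i : ℝ) * ‖iteratedFDerivWithin ℝ i fe X x‖ *
          ‖iteratedFDerivWithin ℝ (l-i) (fun y => a y η) X x‖
        ≤ (l.choose i : ℝ) * (1+‖η‖)^i * (Ca (l-i) * (1+‖η‖)^(⌈m⌉₊ + (l-i))) := by
          have h0 : (0:ℝ) ≤ (l.choose i : ℝ) := Nat.cast_nonneg _
          have h1 : (0:ℝ) ≤ (1+‖η‖)^i := by positivity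
          gcongr
      _ = (l.choose i : ℝ) * Ca (l-i) * ((1+‖η‖)^i * (1+‖η‖)^(⌈m⌉₊ + (l-i))) := by ring
      _ = (l.choose i : ℝ) * Ca (l-i) * (1+‖η‖)^(⌈m⌉₊ + l) := by
          rw [← pow_add, show i + (⌈m⌉₊ + (l-i)) = ⌈m⌉₊ + l from by omega]

end symbol

/-! ### Linearity of the Fourier transform -/

section lin
variable {n : ℕ}

lemma int_exp_mul (u : Eu n → ℂ) (hu : Continuous u) (hcs : HasCompactSupport u) (η : Eu n) :
    Integrable (fun y : Eu n => Complex.exp (-(Complex.I) * ((inner ℝ y η : ℝ) : ℂ)) * u y) := by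
  refine (hu.integrable_of_hasCompactSupport hcs).bdd_mul (c := 1) ?_ (Filter.Eventually.of_forall fun y => ?_)
  · exact (Complex.continuous_exp.comp (continuous_const.mul
      (Complex.continuous_ofReal.comp
        (Continuous.inner continuous_id continuous_const)))).aestronglyMeasurable
  · rw [show -Complex.I * ((inner ℝ y η : ℝ) : ℂ)
        = ((-(inner ℝ y η : ℝ) : ℝ) : ℂ) * Complex.I from by push_cast; ring]
    rw [Complex.norm_exp_ofReal_mul_I]

lemma fourierT_add (u v : Eu n → ℂ) (hu : Continuous u) (hcsu : HasCompactSupport u)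
    (hv : Continuous v) (hcsv : HasCompactSupport v) (η : Eu n) :
    fourierT n (u + v) η = fourierT n u η + fourierT n v η := by
  unfold fourierT
  rw [← mul_add]
  congr 1
  have h1 : (fun y : Eu n => Complex.exp (-(Complex.I) * ((inner ℝ y η : ℝ) : ℂ)) * (u + v) y)
      = fun y : Eu n => Complex.exp (-(Complex.I) * ((inner ℝ y η : ℝ) : ℂ)) * u y
          + Complex.exp (-(Complex.I) * ((inner ℝ y η : ℝ) : ℂ)) * v y := by
    funext y
    simp only [Pi.add_apply]
    ring
  rw [h1, integral_add (int_exp_mul u hu hcsu η) (int_exp_mul v hv hcsv η)]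

lemma fourierT_smul (c : ℂ) (u : Eu n → ℂ) (η : Eu n) :
    fourierT n (c • u) η = c * fourierT n u η := by
  unfold fourierT
  have h1 : (fun y : Eu n => Complex.exp (-(Complex.I) * ((inner ℝ y η : ℝ) : ℂ)) * (c • u) y)
      = fun y : Eu n => c * (Complex.exp (-(Complex.I) * ((inner ℝ y η : ℝ) : ℂ)) * u y) := by
    funext y
    simp only [Pi.smul_apply, smul_eq_mul]
    ring
  rw [h1, integral_const_mul]
  ring

end lin


/-- Theorem 2.4 a): for `a ∈ S^m_{ρ,δ}(X×ℝⁿ)`, the pseudodifferential operator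
`A u (x) = (2π)^{-n/2} ∫ e^{i x·η} a(x,η) û(η) dη` is a linear map taking compactly
supported smooth functions on `X` to smooth functions on `X`. -/
theorem psdo_welldefined_linear {n : ℕ} (X : Set (Eu n)) (hX : IsOpen X)
    (m ρ δ : ℝ) (hρ0 : 0 ≤ ρ) (hρ1 : ρ ≤ 1) (hδ0 : 0 ≤ δ) (hδ1 : δ ≤ 1)
    (a : Eu n → Eu n → ℂ) (ha : SymbolClass n X m ρ δ a)
    (A : (Eu n → ℂ) → Eu n → ℂ)
    (hA : ∀ u : Eu n → ℂ, ∀ x : Eu n,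
      A u x = (((2 * Real.pi) ^ (-(n : ℝ) / 2) : ℝ) : ℂ) *
        ∫ η : Eu n, Complex.exp (Complex.I * ((inner ℝ x η : ℝ) : ℂ)) * a x η *
          fourierT n u η) :
    (∀ u : Eu n → ℂ, ContDiff ℝ (⊤ : ℕ∞) u → HasCompactSupport u → tsupport u ⊆ X →
      ContDiffOn ℝ (⊤ : ℕ∞) (A u) X) ∧
    (∀ u v : Eu n → ℂ,
      ContDiff ℝ (⊤ : ℕ∞) u → HasCompactSupport u → tsupport u ⊆ X →
      ContDiff ℝ (⊤ : ℕ∞) v → HasCompactSupport v → tsupport v ⊆ X →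
      ∀ x ∈ X, A (u + v) x = A u x + A v x) ∧
    (∀ (c : ℂ) (u : Eu n → ℂ),
      ContDiff ℝ (⊤ : ℕ∞) u → HasCompactSupport u → tsupport u ⊆ X →
      ∀ x ∈ X, A (c • u) x = c * A u x) := by
  set g : Eu n → Eu n → ℂ :=
    fun x η => Complex.exp (Complex.I * ((inner ℝ x η : ℝ) : ℂ)) * a x η with hg_def
  have hNice : Nice X ℂ g := nice_of_symbol hX hρ0 hδ1 ha
  refine ⟨?_, ?_, ?_⟩
  · intro u hu hcs _
    obtain ⟨hwc, hwd⟩ := fourierT_decay u hu hcs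
    have hsm := fun k => key hX hwc hwd k ℂ inferInstance inferInstance inferInstance g hNice
    rw [contDiffOn_infty]
    intro k
    refine (ContDiffOn.mul (contDiffOn_const (c := (((2 * Real.pi) ^ (-(n : ℝ) / 2) : ℝ) : ℂ))) (hsm k)).congr fun x hx => ?_
    rw [hA u x]
    congr 1
    refine integral_congr_ae (Filter.Eventually.of_forall fun η => ?_)
    simp only [hg_def, smul_eq_mul]
    ring
  · intro u v hu hcsu _ hv hcsv _ x hx
    obtain ⟨hwcu, hwdu⟩ := fourierT_decay u hu hcsu
    obtain ⟨hwcv, hwdv⟩ := fourierT_decay v hv hcsv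
    have hiu : Integrable (fun η => fourierT n u η • g x η) :=
      nice_integrable hNice hwcu hwdu hx
    have hiv : Integrable (fun η => fourierT n v η • g x η) :=
      nice_integrable hNice hwcv hwdv hx
    rw [hA (u+v) x, hA u x, hA v x, ← mul_add]
    congr 1
    have h1 : (fun η => Complex.exp (Complex.I * ((inner ℝ x η : ℝ) : ℂ)) * a x η
          * fourierT n (u+v) η)
        = fun η => fourierT n u η • g x η + fourierT n v η • g x η := by
      funext η
      rw [fourierT_add u v hu.continuous hcsu hv.continuous hcsv η, smul_eq_mul,
        smul_eq_mul, hg_def]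
      ring
    rw [h1, integral_add hiu hiv]
    congr 1 <;>
      refine integral_congr_ae (Filter.Eventually.of_forall fun η => ?_) <;>
      · simp only [hg_def, smul_eq_mul]
        ring
  · intro c' u hu hcs _ x hx
    rw [hA (c' • u) x, hA u x]
    have h1 : (fun η => Complex.exp (Complex.I * ((inner ℝ x η : ℝ) : ℂ)) * a x η
          * fourierT n (c' • u) η)
        = fun η => c' * (Complex.exp (Complex.I * ((inner ℝ x η : ℝ) : ℂ)) * a x η
          * fourierT n u η) := by
      funext η
      rw [fourierT_smul]
      ring
    rw [h1, integral_const_mul]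
    ring
end
end

section
/- Let v ∈ C_0^∞(ℝⁿ) and a ∈ S^m_{ρ,δ}(X×ℝⁿ) with δ < 1 and supp v ⊆ X. Then the function a_v(ξ) := ∫ v(x) a(x,ξ) e^{ixξ} dx is rapidly decreasing: for every N there is C_N with |a_v(ξ)| ≤ C_N (1+|ξ|)^{m+(δ−1)N}. -/
noncomputable section

open MeasureTheory

/-- Integral of a nonnegative function supported in a compact set is at most
`M * vol K` when the function is bounded by `M`. -/
lemma aux_integral_le {n : ℕ} {K : Set (Eu n)} (hK : IsCompact K)
    {g : Eu n → ℝ} (hg : Integrable g) (hsupp : ∀ x ∉ K, g x = 0)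
    {M : ℝ} (hM : ∀ x, g x ≤ M) :
    ∫ x, g x ≤ M * (volume K).toReal := by
  rw [← MeasureTheory.setIntegral_eq_integral_of_forall_compl_eq_zero hsupp]
  calc ∫ x in K, g x ≤ ∫ _x in K, M :=
        setIntegral_mono_on hg.integrableOn
          (integrableOn_const hK.measure_lt_top.ne) hK.measurableSet
          (fun x _ => hM x)
  _ = M * (volume K).toReal := by rw [setIntegral_const]; rw [smul_eq_mul]; rw [measureReal_def]; ring

set_option maxHeartbeats 1000000 in
/-- The key estimate in Theorem 2.4 b): for `v ∈ C_0^∞` with support in `X` and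
`a ∈ S^m_{ρ,δ}` with `δ < 1`, the function `a_v(ξ) = ∫ v(x) a(x,ξ) e^{i x·ξ} dx`
satisfies `|a_v(ξ)| ≤ C_N (1+|ξ|)^{m+(δ-1)N}` for every `N`. -/
theorem localized_symbol_rapid_decay {n : ℕ} (X : Set (Eu n)) (hX : IsOpen X)
    (m ρ δ : ℝ) (hρ0 : 0 ≤ ρ) (hρ1 : ρ ≤ 1) (hδ0 : 0 ≤ δ) (hδ1 : δ < 1)
    (a : Eu n → Eu n → ℂ) (ha : SymbolClass n X m ρ δ a)
    (v : Eu n → ℂ) (hv : ContDiff ℝ (⊤ : ℕ∞) v) (hvc : HasCompactSupport v)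
    (hvsupp : tsupport v ⊆ X) :
    ∀ N : ℕ, ∃ C : ℝ, ∀ ξ : Eu n,
      ‖∫ x : Eu n, v x * a x ξ * Complex.exp (Complex.I * ((inner ℝ x ξ : ℝ) : ℂ))‖ ≤
        C * (1 + ‖ξ‖) ^ (m + (δ - 1) * (N : ℝ)) := by
  classical
  intro N
  set K : Set (Eu n) := tsupport v with hKdef
  have hK : IsCompact K := hvc
  -- the localized symbol, as a function of `x` for fixed `ξ`
  set F : Eu n → Eu n → ℂ := fun ξ y => v y * a y ξ with hFdef
  -- smoothness of `a (·, ξ)` on `X`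
  have haX : ∀ ξ : Eu n, ContDiffOn ℝ (⊤ : ℕ∞) (fun y => a y ξ) X := by
    intro ξ
    have : ContDiffOn ℝ (⊤ : ℕ∞)
        ((fun p : Eu n × Eu n => a p.1 p.2) ∘ (fun y => (y, ξ))) X :=
      ha.1.comp ((contDiff_id.prodMk contDiff_const).contDiffOn)
        (fun y hy => ⟨hy, Set.mem_univ _⟩)
    exact this
  -- global smoothness of `F ξ`
  have hF : ∀ ξ : Eu n, ContDiff ℝ (⊤ : ℕ∞) (F ξ) := by
    intro ξ
    rw [contDiff_iff_contDiffAt]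
    intro x
    by_cases hx : x ∈ X
    · exact (hv.contDiffAt).mul ((haX ξ).contDiffAt (hX.mem_nhds hx))
    · have hxs : x ∈ (tsupport v)ᶜ := fun h => hx (hvsupp h)
      have hev : F ξ =ᶠ[nhds x] (fun _ => (0 : ℂ)) := by
        filter_upwards [(isClosed_tsupport v).isOpen_compl.mem_nhds hxs] with y hy
        simp [hFdef, image_eq_zero_of_notMem_tsupport hy]
      exact (contDiffAt_const (c := (0 : ℂ))).congr_of_eventuallyEq hev
  -- compact support of `F ξ`
  have hFc : ∀ ξ : Eu n, HasCompactSupport (F ξ) := by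
    intro ξ
    exact hvc.mul_right
  -- bounds on derivatives of `v`
  have hBex : ∀ i : ℕ, ∃ B : ℝ, 0 ≤ B ∧ ∀ x, ‖iteratedFDeriv ℝ i v x‖ ≤ B := by
    intro i
    obtain ⟨B, hB⟩ := hK.exists_bound_of_continuousOn
      (f := iteratedFDeriv ℝ i v)
      ((hv.continuous_iteratedFDeriv (by exact_mod_cast le_top)).continuousOn)
    refine ⟨max B 0, le_max_right _ _, fun x => ?_⟩
    by_cases hx : x ∈ K
    · exact (hB x hx).trans (le_max_left _ _)
    · have : iteratedFDeriv ℝ i v x = 0 := by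
        by_contra h
        exact hx (support_iteratedFDeriv_subset i (by simpa using h))
      simp [this]
  choose B hB0 hBle using hBex
  -- bounds on derivatives of `a (·, ξ)` on `K`
  have hCaex : ∀ l : ℕ, ∃ C : ℝ, 0 ≤ C ∧ ∀ x ∈ K, ∀ ξ : Eu n,
      ‖iteratedFDeriv ℝ l (fun y => a y ξ) x‖ ≤ C * (1 + ‖ξ‖) ^ (m + δ * (l : ℝ)) := by
    intro l
    obtain ⟨C, hC⟩ := ha.2 K hvsupp hK 0 l
    refine ⟨max C 0, le_max_right _ _, fun x hx ξ => ?_⟩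
    have h1 : (fun y => iteratedFDeriv ℝ 0 (fun η => a y η) ξ) =
        (⇑(continuousMultilinearCurryFin0 ℝ (Eu n) ℂ).symm) ∘ (fun y => a y ξ) := by
      funext y
      rw [iteratedFDeriv_zero_eq_comp]
      rfl
    have h2 := hC x hx ξ
    rw [h1, LinearIsometryEquiv.norm_iteratedFDeriv_comp_left] at h2
    have hpow : (0:ℝ) ≤ (1 + ‖ξ‖) ^ (m - ρ * ((0:ℕ) : ℝ) + δ * (l : ℝ)) :=
      Real.rpow_nonneg (by positivity) _
    calc ‖iteratedFDeriv ℝ l (fun y => a y ξ) x‖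
        ≤ C * (1 + ‖ξ‖) ^ (m - ρ * ((0:ℕ) : ℝ) + δ * (l : ℝ)) := h2
      _ ≤ max C 0 * (1 + ‖ξ‖) ^ (m - ρ * ((0:ℕ) : ℝ) + δ * (l : ℝ)) := by
          exact mul_le_mul_of_nonneg_right (le_max_left _ _) hpow
      _ = max C 0 * (1 + ‖ξ‖) ^ (m + δ * (l : ℝ)) := by norm_num
  choose Ca hCa0 hCale using hCaex
  -- vanishing of derivatives of `F ξ` off `K`
  have hzero : ∀ (ξ : Eu n) (j : ℕ) (x : Eu n), x ∉ K →
      iteratedFDeriv ℝ j (F ξ) x = 0 := by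
    intro ξ j x hx
    by_contra h
    have h1 : x ∈ tsupport (F ξ) := support_iteratedFDeriv_subset j (by simpa using h)
    have h2 : tsupport (F ξ) ⊆ K := by
      apply closure_mono
      intro y hy
      simp only [Function.mem_support] at hy
      exact fun hv0 => hy (by simp [hFdef, hv0])
    exact hx (h2 h1)
  -- pointwise bound on the iterated derivatives of `F ξ`
  have hDex : ∀ j : ℕ, ∃ D : ℝ, 0 ≤ D ∧ ∀ (ξ : Eu n) (x : Eu n),
      ‖iteratedFDeriv ℝ j (F ξ) x‖ ≤ D * (1 + ‖ξ‖) ^ (m + δ * (j : ℝ)) := by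
    intro j
    refine ⟨∑ i ∈ Finset.range (j + 1), (j.choose i : ℝ) * B i * Ca (j - i),
      Finset.sum_nonneg (fun i _ => mul_nonneg (mul_nonneg (Nat.cast_nonneg _) (hB0 i)) (hCa0 _)), fun ξ x => ?_⟩
    have hpow0 : (0:ℝ) ≤ (1 + ‖ξ‖) ^ (m + δ * (j : ℝ)) :=
      Real.rpow_nonneg (by positivity) _
    by_cases hx : x ∈ K
    · have hxX : x ∈ X := hvsupp hx
      have heq : iteratedFDeriv ℝ j (F ξ) x = iteratedFDerivWithin ℝ j (F ξ) X x :=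
        (iteratedFDerivWithin_of_isOpen j hX hxX).symm
      rw [heq]
      have hmul := norm_iteratedFDerivWithin_mul_le (𝕜 := ℝ)
        (hv.contDiffOn (s := X)) (haX ξ) hX.uniqueDiffOn hxX
        (n := j) (by exact_mod_cast le_top)
      refine hmul.trans ?_
      rw [Finset.sum_mul]
      apply Finset.sum_le_sum
      intro i hi
      have hiv : iteratedFDerivWithin ℝ i v X x = iteratedFDeriv ℝ i v x :=
        iteratedFDerivWithin_of_isOpen i hX hxX
      have hia : iteratedFDerivWithin ℝ (j - i) (fun y => a y ξ) X x
          = iteratedFDeriv ℝ (j - i) (fun y => a y ξ) x :=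
        iteratedFDerivWithin_of_isOpen (j - i) hX hxX
      rw [hiv, hia]
      have h1 : ‖iteratedFDeriv ℝ i v x‖ ≤ B i := hBle i x
      have h2 : ‖iteratedFDeriv ℝ (j - i) (fun y => a y ξ) x‖ ≤
          Ca (j - i) * (1 + ‖ξ‖) ^ (m + δ * ((j - i : ℕ) : ℝ)) := hCale (j - i) x hx ξ
      have h3 : (1 + ‖ξ‖) ^ (m + δ * ((j - i : ℕ) : ℝ)) ≤ (1 + ‖ξ‖) ^ (m + δ * (j : ℝ)) := by
        apply Real.rpow_le_rpow_of_exponent_le (by simp [norm_nonneg])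
        have : ((j - i : ℕ) : ℝ) ≤ (j : ℝ) := by exact_mod_cast Nat.sub_le j i
        nlinarith
      have h2' : ‖iteratedFDeriv ℝ (j - i) (fun y => a y ξ) x‖ ≤
          Ca (j - i) * (1 + ‖ξ‖) ^ (m + δ * (j : ℝ)) :=
        h2.trans (mul_le_mul_of_nonneg_left h3 (hCa0 _))
      calc (j.choose i : ℝ) * ‖iteratedFDeriv ℝ i v x‖ *
            ‖iteratedFDeriv ℝ (j - i) (fun y => a y ξ) x‖
          ≤ (j.choose i : ℝ) * B i * (Ca (j - i) * (1 + ‖ξ‖) ^ (m + δ * (j : ℝ))) := by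
            apply mul_le_mul (mul_le_mul_of_nonneg_left h1 (Nat.cast_nonneg _)) h2'
              (norm_nonneg _) (mul_nonneg (Nat.cast_nonneg _) (hB0 i))
        _ = (j.choose i : ℝ) * B i * Ca (j - i) * (1 + ‖ξ‖) ^ (m + δ * (j : ℝ)) := by ring
    · rw [hzero ξ j x hx]
      simp only [norm_zero]
      exact mul_nonneg (Finset.sum_nonneg (fun i _ =>
        mul_nonneg (mul_nonneg (Nat.cast_nonneg _) (hB0 i)) (hCa0 _)))
        (Real.rpow_nonneg (by positivity) _)
  choose D hD0 hDle using hDex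
  -- integrability of the weighted derivatives
  have hInt : ∀ (ξ : Eu n) (k j : ℕ),
      Integrable (fun x : Eu n => ‖x‖ ^ k * ‖iteratedFDeriv ℝ j (F ξ) x‖) := by
    intro ξ k j
    apply Continuous.integrable_of_hasCompactSupport
    · exact (continuous_norm.pow k).mul
        ((hF ξ).continuous_iteratedFDeriv (by exact_mod_cast le_top)).norm
    · apply HasCompactSupport.mul_left
      exact ((hFc ξ).iteratedFDeriv j).norm
  -- the basic fourier-side estimate, for every power `M`
  have hA : ∀ M : ℕ, ∃ CC : ℝ, 0 ≤ CC ∧ ∀ ξ : Eu n,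
      ‖ξ‖ ^ M * ‖∫ x : Eu n, v x * a x ξ * Complex.exp (Complex.I * ((inner ℝ x ξ : ℝ) : ℂ))‖ ≤
        CC * (1 + ‖ξ‖) ^ (m + δ * (M : ℝ)) := by
    intro M
    refine ⟨(2 * Real.pi) ^ M * 2 ^ M *
      ((∑ j ∈ Finset.range (M + 1), D j) * (volume K).toReal),
      mul_nonneg (by positivity) (mul_nonneg
        (Finset.sum_nonneg fun j _ => hD0 j) ENNReal.toReal_nonneg), fun ξ => ?_⟩
    set w : Eu n := (-(2 * Real.pi)⁻¹) • ξ with hwdef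
    have hw : ‖w‖ = (2 * Real.pi)⁻¹ * ‖ξ‖ := by
      rw [hwdef, norm_smul, Real.norm_eq_abs, abs_neg,
        abs_of_nonneg (by positivity : (0:ℝ) ≤ (2 * Real.pi)⁻¹)]
    -- identify the integral with a Fourier integral
    have hfour : (∫ x : Eu n, v x * a x ξ * Complex.exp (Complex.I * ((inner ℝ x ξ : ℝ) : ℂ)))
        = FourierTransform.fourier (F ξ) w := by
      rw [Real.fourier_eq']
      apply integral_congr_ae
      filter_upwards with x
      have hip : (inner ℝ x w : ℝ) = -(2 * Real.pi)⁻¹ * (inner ℝ x ξ : ℝ) := by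
        rw [hwdef, real_inner_smul_right]
      rw [smul_eq_mul]
      rw [hip]
      have hπ : (2 * Real.pi) ≠ 0 := by positivity
      have hr : -2 * Real.pi * (-(2 * Real.pi)⁻¹ * (inner ℝ x ξ : ℝ)) = (inner ℝ x ξ : ℝ) := by
        field_simp
      rw [hr, hFdef]
      rw [mul_comm Complex.I (((inner ℝ x ξ : ℝ) : ℂ))]
      ring
    -- the key estimate from Mathlib
    have hkey := Real.pow_mul_norm_iteratedFDeriv_fourier_le (V := Eu n)
      (f := F ξ) (K := (⊤ : ℕ∞)) (N := (⊤ : ℕ∞)) ((hF ξ))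
      (fun k j _ _ => hInt ξ k j) (k := 0) (n := M) le_top le_top w
    rw [norm_iteratedFDeriv_zero] at hkey
    -- bound the sum of integrals
    have hsum : ∑ p ∈ Finset.range (0 + 1) ×ˢ Finset.range (M + 1),
        ∫ x : Eu n, ‖x‖ ^ p.1 * ‖iteratedFDeriv ℝ p.2 (F ξ) x‖ ≤
        ((∑ j ∈ Finset.range (M + 1), D j) * (volume K).toReal) *
          (1 + ‖ξ‖) ^ (m + δ * (M : ℝ)) := by
      rw [Finset.sum_product, Finset.sum_range_one]
      rw [Finset.sum_mul, Finset.sum_mul]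
      apply Finset.sum_le_sum
      intro j hj
      have hjM : (j : ℝ) ≤ (M : ℝ) := by
        exact_mod_cast Nat.lt_succ_iff.mp (Finset.mem_range.mp hj)
      have hmono : (1 + ‖ξ‖) ^ (m + δ * (j : ℝ)) ≤ (1 + ‖ξ‖) ^ (m + δ * (M : ℝ)) := by
        apply Real.rpow_le_rpow_of_exponent_le (by simp [norm_nonneg])
        nlinarith
      have hbd : ∀ x : Eu n, ‖x‖ ^ 0 * ‖iteratedFDeriv ℝ j (F ξ) x‖ ≤
          D j * (1 + ‖ξ‖) ^ (m + δ * (M : ℝ)) := by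
        intro x
        rw [pow_zero, one_mul]
        exact (hDle j ξ x).trans (mul_le_mul_of_nonneg_left hmono (hD0 j))
      have hsupp : ∀ x ∉ K, ‖x‖ ^ 0 * ‖iteratedFDeriv ℝ j (F ξ) x‖ = 0 := by
        intro x hx
        rw [hzero ξ j x hx]
        simp
      calc (∫ x : Eu n, ‖x‖ ^ 0 * ‖iteratedFDeriv ℝ j (F ξ) x‖)
          ≤ (D j * (1 + ‖ξ‖) ^ (m + δ * (M : ℝ))) * (volume K).toReal :=
            aux_integral_le hK (hInt ξ 0 j) hsupp hbd
        _ = D j * (volume K).toReal * (1 + ‖ξ‖) ^ (m + δ * (M : ℝ)) := by ring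
    -- put things together
    have h2π : (0:ℝ) < 2 * Real.pi := by positivity
    have hwM : ‖w‖ ^ M = ((2 * Real.pi)⁻¹) ^ M * ‖ξ‖ ^ M := by
      rw [hw, mul_pow]
    rw [hfour]
    have hfinal := hkey.trans (by
      have : ((2 * Real.pi) ^ (0:ℕ) * (2 * (0:ℕ) + 2) ^ M : ℝ) = 2 ^ M := by norm_num
      calc ((2 * Real.pi) ^ (0:ℕ) * (2 * (0:ℕ) + 2) ^ M : ℝ) *
            ∑ p ∈ Finset.range (0 + 1) ×ˢ Finset.range (M + 1),
              ∫ x : Eu n, ‖x‖ ^ p.1 * ‖iteratedFDeriv ℝ p.2 (F ξ) x‖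
          ≤ 2 ^ M * (((∑ j ∈ Finset.range (M + 1), D j) * (volume K).toReal) *
              (1 + ‖ξ‖) ^ (m + δ * (M : ℝ))) := by
            rw [this]
            exact mul_le_mul_of_nonneg_left hsum (by positivity)
        _ = 2 ^ M * ((∑ j ∈ Finset.range (M + 1), D j) * (volume K).toReal) *
              (1 + ‖ξ‖) ^ (m + δ * (M : ℝ)) := by ring)
    rw [hwM] at hfinal
    -- multiply through by `(2π)^M`
    have := mul_le_mul_of_nonneg_left hfinal (le_of_lt (pow_pos h2π M))
    calc ‖ξ‖ ^ M * ‖FourierTransform.fourier (F ξ) w‖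
        = (2 * Real.pi) ^ M * (((2 * Real.pi)⁻¹) ^ M * ‖ξ‖ ^ M *
            ‖FourierTransform.fourier (F ξ) w‖) := by
          rw [← mul_assoc, ← mul_assoc, ← mul_pow]
          field_simp
          simp
      _ ≤ (2 * Real.pi) ^ M * (2 ^ M * ((∑ j ∈ Finset.range (M + 1), D j) *
            (volume K).toReal) * (1 + ‖ξ‖) ^ (m + δ * (M : ℝ))) := this
      _ = (2 * Real.pi) ^ M * 2 ^ M *
            ((∑ j ∈ Finset.range (M + 1), D j) * (volume K).toReal) *
            (1 + ‖ξ‖) ^ (m + δ * (M : ℝ)) := by ring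
  -- final arithmetic: combine the `M = N` and `M = 0` estimates
  obtain ⟨CN, hCN0, hCN⟩ := hA N
  obtain ⟨C0, hC00, hC0⟩ := hA 0
  refine ⟨CN * 2 ^ N + C0 * (2 : ℝ) ^ ((1 - δ) * (N : ℝ)), fun ξ => ?_⟩
  set t : ℝ := ‖ξ‖ with htdef
  have ht0 : 0 ≤ t := norm_nonneg _
  have h1t : (0:ℝ) < 1 + t := by linarith
  set I : ℝ := ‖∫ x : Eu n, v x * a x ξ * Complex.exp (Complex.I * ((inner ℝ x ξ : ℝ) : ℂ))‖
    with hIdef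
  have hI0 : 0 ≤ I := norm_nonneg _
  have hpowpos : (0:ℝ) < (1 + t) ^ (m + (δ - 1) * (N : ℝ)) := Real.rpow_pos_of_pos h1t _
  rcases le_or_gt t 1 with hcase | hcase
  · -- small frequencies
    have h0 := hC0 ξ
    rw [pow_zero, one_mul] at h0
    have h0' : I ≤ C0 * (1 + t) ^ m := by
      simpa [htdef, hIdef] using h0
    have hsplit : (1 + t) ^ m = (1 + t) ^ (m + (δ - 1) * (N : ℝ)) *
        (1 + t) ^ ((1 - δ) * (N : ℝ)) := by
      rw [← Real.rpow_add h1t]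
      ring_nf
    have hb : (1 + t) ^ ((1 - δ) * (N : ℝ)) ≤ (2:ℝ) ^ ((1 - δ) * (N : ℝ)) :=
      Real.rpow_le_rpow (by linarith) (by linarith) (by nlinarith [Nat.cast_nonneg (α := ℝ) N])
    calc I ≤ C0 * ((1 + t) ^ (m + (δ - 1) * (N : ℝ)) * (1 + t) ^ ((1 - δ) * (N : ℝ))) := by
          rw [← hsplit]; exact h0'
      _ ≤ C0 * ((1 + t) ^ (m + (δ - 1) * (N : ℝ)) * (2:ℝ) ^ ((1 - δ) * (N : ℝ))) := by
          apply mul_le_mul_of_nonneg_left _ hC00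
          exact mul_le_mul_of_nonneg_left hb (le_of_lt hpowpos)
      _ = C0 * (2:ℝ) ^ ((1 - δ) * (N : ℝ)) * (1 + t) ^ (m + (δ - 1) * (N : ℝ)) := by ring
      _ ≤ (CN * 2 ^ N + C0 * (2:ℝ) ^ ((1 - δ) * (N : ℝ))) *
            (1 + t) ^ (m + (δ - 1) * (N : ℝ)) := by
          apply mul_le_mul_of_nonneg_right _ (le_of_lt hpowpos)
          nlinarith [pow_nonneg (by norm_num : (0:ℝ) ≤ 2) N]
  · -- large frequencies
    have hN := hCN ξ
    have hN' : t ^ N * I ≤ CN * (1 + t) ^ (m + δ * (N : ℝ)) := by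
      simpa [htdef, hIdef] using hN
    have htpos : (0:ℝ) < t := by linarith
    have hsplit : (1 + t) ^ (m + δ * (N : ℝ)) =
        (1 + t) ^ (m + (δ - 1) * (N : ℝ)) * (1 + t) ^ (N : ℝ) := by
      rw [← Real.rpow_add h1t]
      ring_nf
    have hb : (1 + t) ^ (N : ℝ) ≤ 2 ^ N * t ^ N := by
      rw [Real.rpow_natCast]
      calc (1 + t) ^ N ≤ (2 * t) ^ N := by
            apply pow_le_pow_left₀ (by linarith) (by linarith)
        _ = 2 ^ N * t ^ N := mul_pow 2 t N
    have hchain : t ^ N * I ≤ CN * 2 ^ N * (1 + t) ^ (m + (δ - 1) * (N : ℝ)) * t ^ N := by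
      calc t ^ N * I ≤ CN * ((1 + t) ^ (m + (δ - 1) * (N : ℝ)) * (1 + t) ^ (N : ℝ)) := by
            rw [← hsplit]; exact hN'
        _ ≤ CN * ((1 + t) ^ (m + (δ - 1) * (N : ℝ)) * (2 ^ N * t ^ N)) := by
            apply mul_le_mul_of_nonneg_left _ hCN0
            exact mul_le_mul_of_nonneg_left hb (le_of_lt hpowpos)
        _ = CN * 2 ^ N * (1 + t) ^ (m + (δ - 1) * (N : ℝ)) * t ^ N := by ring
    have htN : (0:ℝ) < t ^ N := pow_pos htpos N
    have hI' : I ≤ CN * 2 ^ N * (1 + t) ^ (m + (δ - 1) * (N : ℝ)) := by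
      have := le_of_mul_le_mul_right (by
        calc I * t ^ N = t ^ N * I := by ring
          _ ≤ CN * 2 ^ N * (1 + t) ^ (m + (δ - 1) * (N : ℝ)) * t ^ N := hchain) htN
      exact this
    calc I ≤ CN * 2 ^ N * (1 + t) ^ (m + (δ - 1) * (N : ℝ)) := hI'
      _ ≤ (CN * 2 ^ N + C0 * (2:ℝ) ^ ((1 - δ) * (N : ℝ))) *
            (1 + t) ^ (m + (δ - 1) * (N : ℝ)) := by
          apply mul_le_mul_of_nonneg_right _ (le_of_lt hpowpos)
          have : (0:ℝ) ≤ C0 * (2:ℝ) ^ ((1 - δ) * (N : ℝ)) := by positivity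
          linarith
end
end

section
/- Let a > 0, ȧ ≠ 0, μ > 0 be real constants, and for k ∈ ℕ set ω_k = (k(k+2)/a² + μ²)^{1/2} and |β(k)| = (1/(2ω_k)) · a^{−3/2} · |ȧ/a| · (1 + μ²/(2ω_k²)). Then the series Σ_{k=0}^∞ (k+1)² |β(k)|² diverges. -/
noncomputable section

/-- The key computation in the counterexample (Theorem 3.19): with
`ω_k = (k(k+2)/a² + μ²)^{1/2}` and
`|β(k)| = (1/(2ω_k)) a^{-3/2} |ȧ/a| (1 + μ²/(2ω_k²))`, where `a > 0`, `ȧ ≠ 0`,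
`μ > 0`, the series `Σ_k (k+1)² |β(k)|²` diverges. -/
theorem counterexample_series_diverges
    (a adot μ : ℝ) (ha : 0 < a) (hadot : adot ≠ 0) (hμ : 0 < μ)
    (ω : ℕ → ℝ)
    (hω : ∀ k : ℕ, ω k = Real.sqrt ((k : ℝ) * ((k : ℝ) + 2) / a ^ 2 + μ ^ 2))
    (β : ℕ → ℝ)
    (hβ : ∀ k : ℕ, β k = (1 / (2 * ω k)) * a ^ (-(3 : ℝ) / 2) * |adot / a| *
      (1 + μ ^ 2 / (2 * (ω k) ^ 2))) :
    ¬ Summable (fun k : ℕ => ((k : ℝ) + 1) ^ 2 * (β k) ^ 2) := by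
  intro hsum
  set A := a ^ (-(3 : ℝ) / 2) * |adot / a| with hA
  have hApos : 0 < A :=
    mul_pos (Real.rpow_pos_of_pos ha _) (abs_pos.mpr (div_ne_zero hadot ha.ne'))
  have hωsq : ∀ k : ℕ, (ω k) ^ 2 = (k : ℝ) * ((k : ℝ) + 2) / a ^ 2 + μ ^ 2 := by
    intro k
    rw [hω, Real.sq_sqrt]
    positivity
  have hωpos : ∀ k : ℕ, 0 < ω k := by
    intro k
    rw [hω]
    apply Real.sqrt_pos.mpr
    positivity
  set ε := A ^ 2 / (4 * (1 / a ^ 2 + μ ^ 2)) with hε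
  have hεpos : 0 < ε := by positivity
  have hlb : ∀ k : ℕ, ε ≤ ((k : ℝ) + 1) ^ 2 * (β k) ^ 2 := by
    intro k
    have hωk := hωpos k
    have hωs := hωsq k
    have hknn : (0 : ℝ) ≤ (k : ℝ) := Nat.cast_nonneg k
    -- ω² ≤ (k+1)² (1/a² + μ²)
    have h1 : (ω k) ^ 2 ≤ ((k : ℝ) + 1) ^ 2 * (1 / a ^ 2 + μ ^ 2) := by
      rw [hωs]
      have h2 : (k : ℝ) * ((k : ℝ) + 2) / a ^ 2 ≤ ((k : ℝ) + 1) ^ 2 / a ^ 2 := by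
        apply div_le_div_of_nonneg_right _ (by positivity)
        nlinarith
      have h3 : (1 : ℝ) ≤ ((k : ℝ) + 1) ^ 2 := by nlinarith
      have h4 : μ ^ 2 ≤ ((k : ℝ) + 1) ^ 2 * μ ^ 2 := by nlinarith
      calc (k : ℝ) * ((k : ℝ) + 2) / a ^ 2 + μ ^ 2
          ≤ ((k : ℝ) + 1) ^ 2 / a ^ 2 + ((k : ℝ) + 1) ^ 2 * μ ^ 2 := by linarith
        _ = ((k : ℝ) + 1) ^ 2 * (1 / a ^ 2 + μ ^ 2) := by ring
    -- β k ≥ A / (2 ω k)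
    have hβlb : A / (2 * ω k) ≤ β k := by
      rw [hβ]
      have hfac : (1 : ℝ) ≤ 1 + μ ^ 2 / (2 * (ω k) ^ 2) := by
        have : 0 ≤ μ ^ 2 / (2 * (ω k) ^ 2) := by positivity
        linarith
      have hpos : 0 < 1 / (2 * ω k) * a ^ (-(3 : ℝ) / 2) * |adot / a| := by
        have := Real.rpow_pos_of_pos ha (-(3 : ℝ) / 2)
        have := abs_pos.mpr (div_ne_zero hadot ha.ne')
        positivity
      calc A / (2 * ω k) = 1 / (2 * ω k) * a ^ (-(3 : ℝ) / 2) * |adot / a| * 1 := by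
            rw [hA]; ring
        _ ≤ 1 / (2 * ω k) * a ^ (-(3 : ℝ) / 2) * |adot / a| *
              (1 + μ ^ 2 / (2 * (ω k) ^ 2)) := by
            exact mul_le_mul_of_nonneg_left hfac hpos.le
    have hβnn : 0 ≤ A / (2 * ω k) := by positivity
    have hβsq : (A / (2 * ω k)) ^ 2 ≤ (β k) ^ 2 := by
      apply pow_le_pow_left₀ hβnn hβlb _
    have hmain : ε ≤ ((k : ℝ) + 1) ^ 2 * (A / (2 * ω k)) ^ 2 := by
      have hRHS : ((k : ℝ) + 1) ^ 2 * (A / (2 * ω k)) ^ 2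
          = ((k : ℝ) + 1) ^ 2 * A ^ 2 / (4 * (ω k) ^ 2) := by
        field_simp; ring
      rw [hε, hRHS, div_le_div_iff₀ (by positivity) (by positivity)]
      nlinarith [mul_le_mul_of_nonneg_left h1 (sq_nonneg A)]
    calc ε ≤ ((k : ℝ) + 1) ^ 2 * (A / (2 * ω k)) ^ 2 := hmain
      _ ≤ ((k : ℝ) + 1) ^ 2 * (β k) ^ 2 :=
          mul_le_mul_of_nonneg_left hβsq (by positivity)
  have htend := hsum.tendsto_atTop_zero
  have hev := htend.eventually (gt_mem_nhds hεpos)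
  obtain ⟨k, hk⟩ := hev.exists
  exact absurd (hlb k) (not_le.mpr hk)
end
end

section
/- Let H be a real Hilbert space with inner product ⟨·,·⟩, and let R be a symmetric operator and I a symmetric, positive, invertible operator on H (all defined on a common dense domain, bounded for simplicity). Define on pairs F = (f,p) the forms σ(F₁,F₂) = −⟨f₁,p₂⟩ + ⟨p₁,f₂⟩ and the complexified map k(f,p) = (2I)^{−1/2}[(R − iI)f − p] into the complexification H_ℂ. Then 2 Im⟨kF₁,kF₂⟩ = σ(F₁,F₂) and 2 Re⟨kF₁,kF₂⟩ = ⟨Rf₁ − p₁, I^{−1}(Rf₂ − p₂)⟩ + ⟨f₁, I f₂⟩, which is a positive-semidefinite symmetric bilinear form. -/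
noncomputable section

open RealInnerProductSpace

/-- The Deutsch–Najmi parametrization of Fock states (Theorem 3.20): let `R` be a
symmetric and `I` a symmetric, positive, invertible (bounded) operator on a real
Hilbert space `H`, and let `S = (2I)^{-1/2}` (a symmetric operator with
`S² (2I) = (2I) S² = 1`). Writing the one-particle map `k(f,p) = (2I)^{-1/2}[(R-iI)f - p]`
in real and imaginary parts, `k(f,p) = (S(Rf - p), -(S(If)))`, one has
`2 Im⟨kF₁,kF₂⟩ = σ(F₁,F₂) = -⟨f₁,p₂⟩ + ⟨p₁,f₂⟩` and
`2 Re⟨kF₁,kF₂⟩ = ⟨Rf₁ - p₁, I⁻¹(Rf₂ - p₂)⟩ + ⟨f₁, I f₂⟩`, a positive-semidefinite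
symmetric bilinear form. -/
theorem deutsch_najmi_one_particle_structure
    {H : Type*} [NormedAddCommGroup H] [InnerProductSpace ℝ H]
    (R I S Iinv : H →L[ℝ] H)
    (hR : ∀ x y : H, ⟪R x, y⟫ = ⟪x, R y⟫)
    (hI : ∀ x y : H, ⟪I x, y⟫ = ⟪x, I y⟫)
    (hIpos : ∀ x : H, 0 ≤ ⟪I x, x⟫)
    (hIinv₁ : ∀ x : H, I (Iinv x) = x) (hIinv₂ : ∀ x : H, Iinv (I x) = x)
    (hS : ∀ x y : H, ⟪S x, y⟫ = ⟪x, S y⟫)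
    (hS2₁ : ∀ x : H, S (S ((2 : ℝ) • I x)) = x)
    (hS2₂ : ∀ x : H, (2 : ℝ) • I (S (S x)) = x) :
    ∀ f₁ p₁ f₂ p₂ : H,
      (2 * (⟪S (R f₁ - p₁), -(S (I f₂))⟫ - ⟪-(S (I f₁)), S (R f₂ - p₂)⟫) =
        -⟪f₁, p₂⟫ + ⟪p₁, f₂⟫) ∧
      (2 * (⟪S (R f₁ - p₁), S (R f₂ - p₂)⟫ + ⟪S (I f₁), S (I f₂)⟫) =
        ⟪R f₁ - p₁, Iinv (R f₂ - p₂)⟫ + ⟪f₁, I f₂⟫) ∧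
      (⟪R f₁ - p₁, Iinv (R f₂ - p₂)⟫ + ⟪f₁, I f₂⟫ =
        ⟪R f₂ - p₂, Iinv (R f₁ - p₁)⟫ + ⟪f₂, I f₁⟫) ∧
      (0 ≤ ⟪R f₁ - p₁, Iinv (R f₁ - p₁)⟫ + ⟪f₁, I f₁⟫) := by
  -- auxiliary facts
  have hSSI : ∀ x : H, S (S (I x)) = (2⁻¹ : ℝ) • x := by
    intro x
    have h := hS2₁ x
    rw [map_smul, map_smul] at h
    have : (2⁻¹ : ℝ) • ((2:ℝ) • S (S (I x))) = (2⁻¹ : ℝ) • x := by rw [h]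
    simpa [smul_smul] using this
  have hSSinv : ∀ x : H, S (S x) = (2⁻¹ : ℝ) • Iinv x := by
    intro x
    have h := hS2₂ x
    have h2 : Iinv ((2:ℝ) • I (S (S x))) = Iinv x := by rw [h]
    rw [map_smul, hIinv₂] at h2
    have : (2⁻¹ : ℝ) • ((2:ℝ) • S (S x)) = (2⁻¹ : ℝ) • Iinv x := by rw [h2]
    simpa [smul_smul] using this
  have hSI : ∀ x y : H, ⟪S x, S (I y)⟫ = (2⁻¹ : ℝ) * ⟪x, y⟫ := by
    intro x y
    rw [hS, hSSI, real_inner_smul_right]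
  have hSS : ∀ x y : H, ⟪S x, S y⟫ = (2⁻¹ : ℝ) * ⟪x, Iinv y⟫ := by
    intro x y
    rw [hS, hSSinv, real_inner_smul_right]
  have hIinvSym : ∀ x y : H, ⟪Iinv x, y⟫ = ⟪x, Iinv y⟫ := by
    intro x y
    calc ⟪Iinv x, y⟫ = ⟪Iinv x, I (Iinv y)⟫ := by rw [hIinv₁]
      _ = ⟪I (Iinv x), Iinv y⟫ := (hI _ _).symm
      _ = ⟪x, Iinv y⟫ := by rw [hIinv₁]
  intro f₁ p₁ f₂ p₂
  refine ⟨?_, ?_, ?_, ?_⟩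
  · rw [inner_neg_right, inner_neg_left, hSI]
    have h2 : ⟪S (I f₁), S (R f₂ - p₂)⟫ = (2⁻¹ : ℝ) * ⟪R f₂ - p₂, f₁⟫ := by
      rw [real_inner_comm, hSI]
    rw [h2]
    have hRf : ⟪R f₁ - p₁, f₂⟫ = ⟪f₁, R f₂⟫ - ⟪p₁, f₂⟫ := by
      rw [inner_sub_left, hR]
    have hRf2 : ⟪R f₂ - p₂, f₁⟫ = ⟪R f₂, f₁⟫ - ⟪p₂, f₁⟫ := by
      rw [inner_sub_left]
    rw [hRf, hRf2, real_inner_comm (R f₂) f₁, real_inner_comm p₂ f₁]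
    ring
  · rw [hSS, hSI, hI]
    ring
  · have e1 : ⟪R f₁ - p₁, Iinv (R f₂ - p₂)⟫ = ⟪R f₂ - p₂, Iinv (R f₁ - p₁)⟫ := by
      rw [← hIinvSym, real_inner_comm]
    have e2 : ⟪f₁, I f₂⟫ = ⟪f₂, I f₁⟫ := by rw [← hI, real_inner_comm]
    rw [e1, e2]
  · have h1 : (0:ℝ) ≤ ⟪R f₁ - p₁, Iinv (R f₁ - p₁)⟫ := by
      have := hIpos (Iinv (R f₁ - p₁))
      rwa [hIinv₁] at this
    have h2 : (0:ℝ) ≤ ⟪f₁, I f₁⟫ := by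
      have := hIpos f₁
      rwa [real_inner_comm] at this
    linarith
end
end
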